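/- Let N, N' be positive integers and a, b, b', d, e, e' complex numbers with c = -N, c' = -N', a' = d-a, and d+e-a-b+N = 1 (no denominator parameter a nonpositive integer within summation range). Then Σ_{n=0}^{N'} ₃F₂[a, b, -N; d+n, e; 1] · (d-a)_n (b')_n (-N')_n / ((d)_n (e')_n n!) = [(d-a)_N (e-a)_N (e'-b')_{N'} / ((d)_N (e)_N (e')_{N'})] · ₄F₃[b', a, -N', 1-e+a; 1+b'-N'-e', d+N, 1-e+a-N; 1]. -/

import Mathlib

open Complex Finset

/-- Pochhammer symbol `(a)_k = a(a+1)⋯(a+k-1)`. -/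
noncomputable def poch (a : ℂ) (k : ℕ) : ℂ := ∏ i ∈ Finset.range k, (a + i)

/-- `z` is not a nonpositive integer. -/
def notNonposInt (z : ℂ) : Prop := ∀ k : ℕ, z ≠ -(k : ℂ)

lemma poch_zero (a : ℂ) : poch a 0 = 1 := by simp [poch]

lemma poch_succ (a : ℂ) (k : ℕ) : poch a (k+1) = poch a k * (a + k) :=
  Finset.prod_range_succ _ _

lemma poch_add (a : ℂ) (m n : ℕ) : poch a (m+n) = poch a m * poch (a + m) n := by
  unfold poch
  rw [Finset.prod_range_add]
  congr 1
  refine Finset.prod_congr rfl fun i _ => ?_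
  push_cast; ring

lemma poch_one (a : ℂ) : poch a 1 = a := by simp [poch]

lemma poch_succ_left (a : ℂ) (k : ℕ) : poch a (k+1) = a * poch (a+1) k := by
  rw [show k + 1 = 1 + k from by omega, poch_add, poch_one]
  norm_num

lemma poch_ne_zero_left {a : ℂ} {n : ℕ} (h : poch a n ≠ 0) {k : ℕ} (hk : k ≤ n) :
    poch a k ≠ 0 := by
  intro h0
  apply h
  rw [show n = k + (n - k) from by omega, poch_add, h0, zero_mul]

lemma poch_ne_zero_right {a : ℂ} {n : ℕ} (h : poch a n ≠ 0) {k : ℕ} (hk : k ≤ n) :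
    poch (a + k) (n - k) ≠ 0 := by
  intro h0
  apply h
  rw [show n = k + (n - k) from by omega, poch_add, h0, mul_zero]

lemma poch_neg_nat_eq_zero {n k : ℕ} (h : n < k) : poch (-(n:ℂ)) k = 0 := by
  apply Finset.prod_eq_zero (Finset.mem_range.mpr h)
  simp

lemma poch_neg_nat_mul {n k : ℕ} (h : k ≤ n) :
    poch (-(n:ℂ)) k * ((n-k).factorial : ℂ) = (-1)^k * (n.factorial : ℂ) := by
  induction k with
  | zero => simp [poch_zero]
  | succ k ih =>
      have hk : k ≤ n := by omega
      have h1 : (n - k) = (n - (k+1)) + 1 := by omega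
      have h2 : ((n:ℂ) - k) = ((n - k : ℕ) : ℂ) := by
        push_cast [Nat.cast_sub hk]; ring
      have ihk := ih hk
      rw [h1, Nat.factorial_succ] at ihk
      push_cast at ihk
      rw [poch_succ]
      push_cast
      have h5 : -(n:ℂ) + k = -((n:ℂ) - k) := by ring
      calc poch (-(n:ℂ)) k * (-(n:ℂ) + k) * ((n - (k+1)).factorial : ℂ)
          = -(poch (-(n:ℂ)) k * (((n - (k+1) : ℕ) + 1 : ℂ)) * ((n - (k+1)).factorial : ℂ)) := by
            have h3 : ((n - (k+1) : ℕ) + 1 : ℂ) = (n:ℂ) - k := by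
              push_cast [Nat.cast_sub (show k+1 ≤ n from h)]; ring
            rw [h3, h5]; ring
        _ = -((-1)^k * (n.factorial : ℂ)) := by rw [← ihk]; ring
        _ = (-1)^(k+1) * (n.factorial : ℂ) := by ring

lemma poch_neg_nat {n k : ℕ} (h : k ≤ n) :
    poch (-(n:ℂ)) k = (-1)^k * (n.factorial : ℂ) / ((n-k).factorial : ℂ) := by
  have hf : ((n-k).factorial : ℂ) ≠ 0 := by exact_mod_cast (n-k).factorial_ne_zero
  field_simp
  exact poch_neg_nat_mul h

lemma poch_reflect (x : ℂ) (k : ℕ) : poch (1 - x - (k:ℂ)) k = (-1)^k * poch x k := by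
  unfold poch
  rw [← Finset.prod_range_reflect]
  have h : ∀ i ∈ Finset.range k, (1 - x - (k:ℂ) + ((k - 1 - i : ℕ) : ℂ)) = -(x + i) := by
    intro i hi
    rw [Finset.mem_range] at hi
    rw [Nat.cast_sub (by omega : i ≤ k - 1), Nat.cast_sub (by omega : 1 ≤ k)]
    push_cast; ring
  rw [Finset.prod_congr rfl h]
  rw [show (∏ i ∈ Finset.range k, -(x + i)) = ∏ i ∈ Finset.range k, (-1) * (x + i) from by
    refine Finset.prod_congr rfl fun i _ => by ring]
  rw [Finset.prod_mul_distrib, Finset.prod_const]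
  simp [Finset.card_range]

lemma vdm_poly (n : ℕ) (x : ℂ) : ∀ y : ℂ,
    ∑ k ∈ Finset.range (n+1), (-1)^k * (n.choose k : ℂ) * poch x k * poch (y + k) (n - k)
      = poch (y - x) n := by
  induction n with
  | zero => intro y; simp [poch_zero]
  | succ n ih =>
    intro y
    rw [Finset.sum_range_succ']
    have hstep : ∀ k ∈ Finset.range (n+1),
        (-1)^(k+1) * (((n+1).choose (k+1) : ℕ) : ℂ) * poch x (k+1) *
            poch (y + ((k+1 : ℕ) : ℂ)) (n+1-(k+1))
        = ((-1)^(k+1) * ((n.choose (k+1) : ℕ) : ℂ) * poch x (k+1) *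
            poch (y + ((k+1 : ℕ) : ℂ)) (n+1-(k+1)))
          + ((y - x) * ((-1)^k * (n.choose k : ℂ) * poch x k * poch ((y+1) + (k : ℂ)) (n-k))
             - ((-1)^k * (n.choose k : ℂ) * poch x k *
                 ((y + k) * poch ((y+1) + (k : ℂ)) (n-k)))) := by
      intro k hk
      rw [Finset.mem_range] at hk
      have hc : (((n+1).choose (k+1) : ℕ) : ℂ)
          = ((n.choose k : ℕ) : ℂ) + ((n.choose (k+1) : ℕ) : ℂ) := by
        exact_mod_cast congrArg (Nat.cast (R := ℂ)) (Nat.choose_succ_succ n k)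
      rw [hc, poch_succ x k]
      push_cast
      ring
    rw [Finset.sum_congr rfl hstep, Finset.sum_add_distrib, Finset.sum_sub_distrib,
        ← Finset.mul_sum]
    have hyk : ∀ k ∈ Finset.range (n+1),
        (-1)^k * (n.choose k : ℂ) * poch x k * ((y + k) * poch ((y+1) + (k : ℂ)) (n-k))
        = (-1)^k * (n.choose k : ℂ) * poch x k * poch (y + (k : ℂ)) (n+1-k) := by
      intro k hk
      rw [Finset.mem_range] at hk
      rw [show n+1-k = (n-k)+1 from by omega, poch_succ_left]
      rw [show y + (k:ℂ) + 1 = (y+1) + (k:ℂ) from by ring]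
    rw [Finset.sum_congr rfl hyk]
    have hext : ∑ k ∈ Finset.range (n+1),
          (-1)^(k+1) * ((n.choose (k+1) : ℕ) : ℂ) * poch x (k+1) *
            poch (y + ((k+1 : ℕ) : ℂ)) (n+1-(k+1))
        = (∑ k ∈ Finset.range (n+1),
            (-1)^k * ((n.choose k : ℕ) : ℂ) * poch x k * poch (y + (k : ℂ)) (n+1-k))
          - (-1)^0 * ((n.choose 0 : ℕ) : ℂ) * poch x 0 * poch (y + ((0:ℕ) : ℂ)) (n+1-0) := by
      rw [eq_sub_iff_add_eq]
      have h2 : ∑ k ∈ Finset.range (n+1),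
            (-1)^k * ((n.choose k : ℕ) : ℂ) * poch x k * poch (y + (k : ℂ)) (n+1-k)
          = ∑ k ∈ Finset.range ((n+1)+1),
            (-1)^k * ((n.choose k : ℕ) : ℂ) * poch x k * poch (y + (k : ℂ)) (n+1-k) := by
        conv_rhs => rw [Finset.sum_range_succ]
        rw [Nat.choose_succ_self]
        simp
      rw [h2, Finset.sum_range_succ' (fun k =>
        (-1)^k * ((n.choose k : ℕ) : ℂ) * poch x k * poch (y + (k : ℂ)) (n+1-k)) (n+1)]
    rw [hext, ih (y+1)]
    have h0a : ((-1:ℂ))^0 * (((n+1).choose 0 : ℕ) : ℂ) * poch x 0 * poch (y + ((0:ℕ):ℂ)) (n+1-0)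
        = poch y (n+1) := by norm_num [poch_zero]
    have h0b : ((-1:ℂ))^0 * ((n.choose 0 : ℕ) : ℂ) * poch x 0 * poch (y + ((0:ℕ):ℂ)) (n+1-0)
        = poch y (n+1) := by norm_num [poch_zero]
    rw [h0a, h0b, show y + 1 - x = (y - x) + 1 from by ring, ← poch_succ_left]
    ring

lemma vdm_div (n : ℕ) (x y : ℂ) (hy : poch y n ≠ 0) :
    ∑ k ∈ Finset.range (n+1), poch (-(n:ℂ)) k * poch x k / (poch y k * (k.factorial : ℂ))
      = poch (y - x) n / poch y n := by
  rw [eq_div_iff hy, ← vdm_poly n x y, Finset.sum_mul]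
  refine Finset.sum_congr rfl fun k hk => ?_
  rw [Finset.mem_range] at hk
  have hk' : k ≤ n := by omega
  have hsplit : poch y n = poch y k * poch (y + k) (n - k) := by
    rw [← poch_add, Nat.add_sub_cancel' hk']
  have hyk : poch y k ≠ 0 := poch_ne_zero_left hy hk'
  have hkf : (k.factorial : ℂ) ≠ 0 := by exact_mod_cast k.factorial_ne_zero
  have hnkf : ((n-k).factorial : ℂ) ≠ 0 := by exact_mod_cast (n-k).factorial_ne_zero
  have hC : (n.choose k : ℂ) * (k.factorial : ℂ) * ((n-k).factorial : ℂ)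
      = (n.factorial : ℂ) := by exact_mod_cast Nat.choose_mul_factorial_mul_factorial hk'
  rw [poch_neg_nat hk', hsplit]
  field_simp
  linear_combination (-(poch x k * poch (y + (k:ℂ)) (n-k))) * hC

lemma ratio_expand {K k : ℕ} (hk : k ≤ K) (x y : ℂ) (hy : poch y k ≠ 0) :
    poch x k / poch y k
      = ∑ j ∈ Finset.range (K+1),
          poch (-(k:ℂ)) j * poch (y - x) j / (poch y j * (j.factorial : ℂ)) := by
  have h := vdm_div k (y - x) y hy
  rw [show y - (y - x) = x from by ring] at h
  rw [← h]
  refine Finset.sum_subset (Finset.range_subset_range.mpr (by omega)) fun j _ hj => ?_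
  rw [Finset.mem_range, not_lt] at hj
  rw [poch_neg_nat_eq_zero (by omega), zero_mul, zero_div]

lemma sum_eval {K j : ℕ} (hj : j ≤ K) (α β : ℂ) (hβ : poch β K ≠ 0) :
    ∑ k ∈ Finset.range (K+1),
        poch α k * poch (-(K:ℂ)) k * poch (-(k:ℂ)) j / (poch β k * (k.factorial : ℂ))
      = (-1)^j * poch α j * poch (-(K:ℂ)) j * poch (β - α) (K-j) / poch β K := by
  have hβj : poch β j ≠ 0 := poch_ne_zero_left hβ hj
  have hβj' : poch (β + j) (K - j) ≠ 0 := poch_ne_zero_right hβ hj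
  rw [Finset.range_eq_Ico, ← Finset.sum_Ico_consecutive _ (Nat.zero_le j)
    (by omega : j ≤ K+1)]
  have hz : ∑ k ∈ Finset.Ico 0 j,
      poch α k * poch (-(K:ℂ)) k * poch (-(k:ℂ)) j / (poch β k * (k.factorial : ℂ)) = 0 := by
    refine Finset.sum_eq_zero fun k hk => ?_
    rw [Finset.mem_Ico] at hk
    rw [poch_neg_nat_eq_zero hk.2, mul_zero, zero_div]
  rw [hz, zero_add, Finset.sum_Ico_eq_sum_range]
  rw [show K + 1 - j = (K - j) + 1 from by omega]
  have hterm : ∀ m ∈ Finset.range ((K-j)+1),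
      poch α (j+m) * poch (-(K:ℂ)) (j+m) * poch (-((j+m : ℕ):ℂ)) j /
          (poch β (j+m) * ((j+m).factorial : ℂ))
      = ((-1)^j * poch α j * poch (-(K:ℂ)) j / poch β j) *
          (poch (-((K-j : ℕ):ℂ)) m * poch (α + j) m / (poch (β + j) m * (m.factorial : ℂ))) := by
    intro m hm
    rw [Finset.mem_range] at hm
    have hm' : m ≤ K - j := by omega
    have h1 : poch α (j+m) = poch α j * poch (α + j) m := poch_add α j m
    have h2 : poch (-(K:ℂ)) (j+m) = poch (-(K:ℂ)) j * poch (-((K-j : ℕ):ℂ)) m := by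
      rw [poch_add]
      congr 2
      push_cast [Nat.cast_sub hj]; ring
    have h3 : poch (-((j+m : ℕ):ℂ)) j
        = (-1)^j * ((j+m).factorial : ℂ) / ((m).factorial : ℂ) := by
      have h := poch_neg_nat (n := j+m) (k := j) (by omega)
      rwa [show j + m - j = m from by omega] at h
    have h4 : poch β (j+m) = poch β j * poch (β + j) m := poch_add β j m
    have hβm : poch (β + j) m ≠ 0 := poch_ne_zero_left hβj' hm'
    have hf1 : ((j+m).factorial : ℂ) ≠ 0 := by exact_mod_cast (j+m).factorial_ne_zero
    have hf2 : ((m).factorial : ℂ) ≠ 0 := by exact_mod_cast (m).factorial_ne_zero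
    rw [h1, h2, h3, h4]
    field_simp
  rw [Finset.sum_congr rfl hterm, ← Finset.mul_sum,
      vdm_div (K-j) (α + j) (β + j) hβj',
      show β + (j:ℂ) - (α + (j:ℂ)) = β - α from by ring]
  have hβK : poch β K = poch β j * poch (β + j) (K - j) := by
    rw [← poch_add, Nat.add_sub_cancel' hj]
  rw [hβK]
  field_simp
theorem kdf2_case_ii_core (N N' : ℕ) (hN : 0 < N) (hN' : 0 < N')
    (a b c c' d e e' b' : ℂ)
    (hc : c = -(N : ℂ)) (hc' : c' = -(N' : ℂ))
    (hsal : d + e - a - b + (N : ℂ) = 1)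
    (hden1 : ∀ n : ℕ, n ≤ N' → poch (d + (n : ℂ)) N ≠ 0)
    (hden2 : poch e N ≠ 0) (hden3 : poch d N' ≠ 0) (hden4 : poch e' N' ≠ 0)
    (hden5 : poch (1 + b' - (N' : ℂ) - e') N' ≠ 0)
    (hden6 : poch (d + (N : ℂ)) N' ≠ 0)
    (hden7 : poch (1 - e + a - (N : ℂ)) N' ≠ 0) :
    (∑ n ∈ Finset.range (N' + 1),
        (∑ k ∈ Finset.range (N + 1),
            poch a k * poch b k * poch (-(N : ℂ)) k /
              (poch (d + (n : ℂ)) k * poch e k * (Nat.factorial k : ℂ))) *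
          (poch (d - a) n * poch b' n * poch (-(N' : ℂ)) n /
            (poch d n * poch e' n * (Nat.factorial n : ℂ)))) =
      poch (d - a) N * poch (e - a) N * poch (e' - b') N' /
          (poch d N * poch e N * poch e' N') *
        ∑ k ∈ Finset.range (N' + 1),
          poch b' k * poch a k * poch (-(N' : ℂ)) k * poch (1 - e + a) k /
            (poch (1 + b' - (N' : ℂ) - e') k * poch (d + (N : ℂ)) k *
              poch (1 - e + a - (N : ℂ)) k * (Nat.factorial k : ℂ)) := by
  have hdN : poch d N ≠ 0 := by
    have h := hden1 0 (Nat.zero_le _)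
    simpa using h
  -- Step A : evaluate the inner k-sum as a j-sum
  have inner : ∀ n : ℕ, n ≤ N' →
      (∑ k ∈ Finset.range (N + 1),
          poch a k * poch b k * poch (-(N : ℂ)) k /
            (poch (d + (n : ℂ)) k * poch e k * (Nat.factorial k : ℂ)))
      = ∑ j ∈ Finset.range (N + 1),
          ((-1)^j * poch a j * poch (-(N:ℂ)) j * poch (d + (n:ℂ) - a) (N - j) /
              poch (d + (n:ℂ)) N) *
            (poch (e - b) j / (poch e j * (Nat.factorial j : ℂ))) := by
    intro n hn
    calc (∑ k ∈ Finset.range (N + 1),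
          poch a k * poch b k * poch (-(N : ℂ)) k /
            (poch (d + (n : ℂ)) k * poch e k * (Nat.factorial k : ℂ)))
        = ∑ k ∈ Finset.range (N+1), ∑ j ∈ Finset.range (N+1),
            (poch a k * poch (-(N:ℂ)) k * poch (-(k:ℂ)) j /
              (poch (d + (n:ℂ)) k * (Nat.factorial k : ℂ))) *
            (poch (e - b) j / (poch e j * (Nat.factorial j : ℂ))) := by
          refine Finset.sum_congr rfl fun k hk => ?_
          rw [Finset.mem_range] at hk
          have hk' : k ≤ N := by omega
          rw [show poch a k * poch b k * poch (-(N : ℂ)) k /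
                (poch (d + (n : ℂ)) k * poch e k * (Nat.factorial k : ℂ))
              = (poch a k * poch (-(N:ℂ)) k / (poch (d + (n:ℂ)) k * (Nat.factorial k : ℂ))) *
                (poch b k / poch e k) from by ring]
          rw [ratio_expand hk' b e (poch_ne_zero_left hden2 hk'), Finset.mul_sum]
          exact Finset.sum_congr rfl fun j _ => by ring
      _ = ∑ j ∈ Finset.range (N+1), ∑ k ∈ Finset.range (N+1),
            (poch a k * poch (-(N:ℂ)) k * poch (-(k:ℂ)) j /
              (poch (d + (n:ℂ)) k * (Nat.factorial k : ℂ))) *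
            (poch (e - b) j / (poch e j * (Nat.factorial j : ℂ))) := Finset.sum_comm
      _ = ∑ j ∈ Finset.range (N + 1),
          ((-1)^j * poch a j * poch (-(N:ℂ)) j * poch (d + (n:ℂ) - a) (N - j) /
              poch (d + (n:ℂ)) N) *
            (poch (e - b) j / (poch e j * (Nat.factorial j : ℂ))) := by
          refine Finset.sum_congr rfl fun j hj => ?_
          rw [Finset.mem_range] at hj
          have hj' : j ≤ N := by omega
          rw [← Finset.sum_mul, sum_eval hj' a (d + (n:ℂ)) (hden1 n hn)]
  -- Step B : evaluate the n-sum for fixed j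
  have Teval : ∀ j : ℕ, j ≤ N →
      (∑ n ∈ Finset.range (N'+1),
          poch (d - a + ((N-j : ℕ):ℂ)) n * poch b' n * poch (-(N':ℂ)) n /
            (poch (d + (N:ℂ)) n * poch e' n * (Nat.factorial n : ℂ)))
      = (poch (e' - b') N' / poch e' N') *
          ∑ i ∈ Finset.range (N'+1),
            poch (a + (j:ℂ)) i * poch b' i * poch (-(N':ℂ)) i /
              (poch (d + (N:ℂ)) i * poch (1 + b' - (N':ℂ) - e') i * (Nat.factorial i : ℂ)) := by
    intro j hj
    calc (∑ n ∈ Finset.range (N'+1),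
          poch (d - a + ((N-j : ℕ):ℂ)) n * poch b' n * poch (-(N':ℂ)) n /
            (poch (d + (N:ℂ)) n * poch e' n * (Nat.factorial n : ℂ)))
        = ∑ n ∈ Finset.range (N'+1), ∑ i ∈ Finset.range (N'+1),
            (poch b' n * poch (-(N':ℂ)) n * poch (-(n:ℂ)) i /
              (poch e' n * (Nat.factorial n : ℂ))) *
            (poch (a + (j:ℂ)) i / (poch (d + (N:ℂ)) i * (Nat.factorial i : ℂ))) := by
          refine Finset.sum_congr rfl fun n hn => ?_
          rw [Finset.mem_range] at hn
          have hn' : n ≤ N' := by omega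
          rw [show poch (d - a + ((N-j : ℕ):ℂ)) n * poch b' n * poch (-(N':ℂ)) n /
                (poch (d + (N:ℂ)) n * poch e' n * (Nat.factorial n : ℂ))
              = (poch b' n * poch (-(N':ℂ)) n / (poch e' n * (Nat.factorial n : ℂ))) *
                (poch (d - a + ((N-j : ℕ):ℂ)) n / poch (d + (N:ℂ)) n) from by ring]
          rw [ratio_expand hn' (d - a + ((N-j : ℕ):ℂ)) (d + (N:ℂ))
                (poch_ne_zero_left hden6 hn'),
              show (d + (N:ℂ)) - (d - a + ((N-j : ℕ):ℂ)) = a + (j:ℂ) from by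
                push_cast [Nat.cast_sub hj]; ring,
              Finset.mul_sum]
          exact Finset.sum_congr rfl fun i _ => by ring
      _ = ∑ i ∈ Finset.range (N'+1), ∑ n ∈ Finset.range (N'+1),
            (poch b' n * poch (-(N':ℂ)) n * poch (-(n:ℂ)) i /
              (poch e' n * (Nat.factorial n : ℂ))) *
            (poch (a + (j:ℂ)) i / (poch (d + (N:ℂ)) i * (Nat.factorial i : ℂ))) :=
          Finset.sum_comm
      _ = ∑ i ∈ Finset.range (N'+1),
            ((-1)^i * poch b' i * poch (-(N':ℂ)) i * poch (e' - b') (N'-i) / poch e' N') *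
            (poch (a + (j:ℂ)) i / (poch (d + (N:ℂ)) i * (Nat.factorial i : ℂ))) := by
          refine Finset.sum_congr rfl fun i hi => ?_
          rw [Finset.mem_range] at hi
          have hi' : i ≤ N' := by omega
          rw [← Finset.sum_mul, sum_eval hi' b' e' hden4]
      _ = ∑ i ∈ Finset.range (N'+1),
            (poch (e' - b') N' / poch e' N') *
            (poch (a + (j:ℂ)) i * poch b' i * poch (-(N':ℂ)) i /
              (poch (d + (N:ℂ)) i * poch (1 + b' - (N':ℂ) - e') i * (Nat.factorial i : ℂ))) := by
          refine Finset.sum_congr rfl fun i hi => ?_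
          rw [Finset.mem_range] at hi
          have hi' : i ≤ N' := by omega
          have h5i : poch (1 + b' - (N':ℂ) - e') i ≠ 0 := poch_ne_zero_left hden5 hi'
          have hBdiv : (-1)^i * poch (e' - b') (N'-i)
              = poch (e' - b') N' / poch (1 + b' - (N':ℂ) - e') i := by
            rw [eq_div_iff h5i]
            have hr : poch ((e' - b') + ((N'-i : ℕ):ℂ)) i
                = (-1)^i * poch (1 + b' - (N':ℂ) - e') i := by
              rw [show (e' - b') + ((N'-i : ℕ):ℂ)
                  = 1 - (1 + b' - (N':ℂ) - e') - (i:ℂ) from by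
                    push_cast [Nat.cast_sub hi']; ring]
              exact poch_reflect _ i
            have hadd : poch (e' - b') (N'-i) * poch ((e' - b') + ((N'-i : ℕ):ℂ)) i
                = poch (e' - b') N' := by
              rw [← poch_add]
              congr 1
              omega
            calc (-1)^i * poch (e' - b') (N'-i) * poch (1 + b' - (N':ℂ) - e') i
                = poch (e' - b') (N'-i) * ((-1)^i * poch (1 + b' - (N':ℂ) - e') i) := by ring
              _ = poch (e' - b') (N'-i) * poch ((e' - b') + ((N'-i : ℕ):ℂ)) i := by rw [hr]
              _ = poch (e' - b') N' := hadd
          calc ((-1)^i * poch b' i * poch (-(N':ℂ)) i * poch (e' - b') (N'-i) / poch e' N') *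
                (poch (a + (j:ℂ)) i / (poch (d + (N:ℂ)) i * (Nat.factorial i : ℂ)))
              = ((-1)^i * poch (e' - b') (N'-i)) *
                  (poch b' i * poch (-(N':ℂ)) i * poch (a + (j:ℂ)) i) /
                  (poch e' N' * (poch (d + (N:ℂ)) i * (Nat.factorial i : ℂ))) := by ring
            _ = (poch (e' - b') N' / poch (1 + b' - (N':ℂ) - e') i) *
                  (poch b' i * poch (-(N':ℂ)) i * poch (a + (j:ℂ)) i) /
                  (poch e' N' * (poch (d + (N:ℂ)) i * (Nat.factorial i : ℂ))) := by rw [hBdiv]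
            _ = (poch (e' - b') N' / poch e' N') *
                  (poch (a + (j:ℂ)) i * poch b' i * poch (-(N':ℂ)) i /
                    (poch (d + (N:ℂ)) i * poch (1 + b' - (N':ℂ) - e') i *
                      (Nat.factorial i : ℂ))) := by ring
      _ = (poch (e' - b') N' / poch e' N') *
          ∑ i ∈ Finset.range (N'+1),
            poch (a + (j:ℂ)) i * poch b' i * poch (-(N':ℂ)) i /
              (poch (d + (N:ℂ)) i * poch (1 + b' - (N':ℂ) - e') i * (Nat.factorial i : ℂ)) :=
          (Finset.mul_sum _ _ _).symm
  -- nonvanishing casts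
  calc (∑ n ∈ Finset.range (N' + 1),
        (∑ k ∈ Finset.range (N + 1),
            poch a k * poch b k * poch (-(N : ℂ)) k /
              (poch (d + (n : ℂ)) k * poch e k * (Nat.factorial k : ℂ))) *
          (poch (d - a) n * poch b' n * poch (-(N' : ℂ)) n /
            (poch d n * poch e' n * (Nat.factorial n : ℂ))))
      = ∑ n ∈ Finset.range (N' + 1),
          (∑ j ∈ Finset.range (N + 1),
            ((-1)^j * poch a j * poch (-(N:ℂ)) j * poch (d + (n:ℂ) - a) (N - j) /
                poch (d + (n:ℂ)) N) *
              (poch (e - b) j / (poch e j * (Nat.factorial j : ℂ)))) *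
          (poch (d - a) n * poch b' n * poch (-(N' : ℂ)) n /
            (poch d n * poch e' n * (Nat.factorial n : ℂ))) := by
        refine Finset.sum_congr rfl fun n hn => ?_
        rw [Finset.mem_range] at hn
        rw [inner n (by omega)]
    _ = ∑ n ∈ Finset.range (N' + 1), ∑ j ∈ Finset.range (N + 1),
          (((-1)^j * poch a j * poch (-(N:ℂ)) j * poch (d + (n:ℂ) - a) (N - j) /
                poch (d + (n:ℂ)) N) *
              (poch (e - b) j / (poch e j * (Nat.factorial j : ℂ)))) *
          (poch (d - a) n * poch b' n * poch (-(N' : ℂ)) n /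
            (poch d n * poch e' n * (Nat.factorial n : ℂ))) := by
        exact Finset.sum_congr rfl fun n _ => Finset.sum_mul _ _ _
    _ = ∑ j ∈ Finset.range (N + 1), ∑ n ∈ Finset.range (N' + 1),
          (((-1)^j * poch a j * poch (-(N:ℂ)) j * poch (d + (n:ℂ) - a) (N - j) /
                poch (d + (n:ℂ)) N) *
              (poch (e - b) j / (poch e j * (Nat.factorial j : ℂ)))) *
          (poch (d - a) n * poch b' n * poch (-(N' : ℂ)) n /
            (poch d n * poch e' n * (Nat.factorial n : ℂ))) := Finset.sum_comm
    _ = ∑ j ∈ Finset.range (N + 1), ∑ n ∈ Finset.range (N' + 1),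
          (poch a j * poch (-(N:ℂ)) j * poch (d - a) N /
            (poch e j * (Nat.factorial j : ℂ) * poch d N)) *
          (poch (d - a + ((N-j : ℕ):ℂ)) n * poch b' n * poch (-(N':ℂ)) n /
            (poch (d + (N:ℂ)) n * poch e' n * (Nat.factorial n : ℂ))) := by
        refine Finset.sum_congr rfl fun j hj => Finset.sum_congr rfl fun n hn => ?_
        rw [Finset.mem_range] at hj hn
        have hj' : j ≤ N := by omega
        have hA1 : poch (d - a) n * poch (d + (n:ℂ) - a) (N - j)
            = poch (d - a) (N - j) * poch (d - a + ((N-j : ℕ):ℂ)) n := by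
          rw [show d + (n:ℂ) - a = d - a + (n:ℂ) from by ring, ← poch_add, ← poch_add]
          congr 1
          omega
        have hA2 : poch d n * poch (d + (n:ℂ)) N = poch d N * poch (d + (N:ℂ)) n := by
          rw [← poch_add, ← poch_add]
          congr 1
          omega
        have hA3 : poch (e - b) j = (-1)^j * poch (d - a + ((N-j : ℕ):ℂ)) j := by
          rw [show e - b = 1 - (d - a + ((N-j : ℕ):ℂ)) - (j:ℂ) from by
            push_cast [Nat.cast_sub hj']
            linear_combination hsal]
          exact poch_reflect _ j
        have hsq : ((-1:ℂ))^j * (-1)^j = 1 := by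
          rw [← mul_pow]; norm_num
        have hNN : poch (d - a) (N - j) * poch (d - a + ((N-j : ℕ):ℂ)) j
            = poch (d - a) N := by
          rw [← poch_add]
          congr 1
          omega
        have hA13 : (-1)^j * poch (e - b) j *
              (poch (d - a) n * poch (d + (n:ℂ) - a) (N - j))
            = poch (d - a) N * poch (d - a + ((N-j : ℕ):ℂ)) n := by
          rw [hA3, hA1]
          calc (-1)^j * ((-1)^j * poch (d - a + ((N-j : ℕ):ℂ)) j) *
                (poch (d - a) (N - j) * poch (d - a + ((N-j : ℕ):ℂ)) n)
              = ((-1)^j * (-1)^j) *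
                  ((poch (d - a) (N - j) * poch (d - a + ((N-j : ℕ):ℂ)) j) *
                    poch (d - a + ((N-j : ℕ):ℂ)) n) := by ring
            _ = poch (d - a) N * poch (d - a + ((N-j : ℕ):ℂ)) n := by
                rw [hsq, hNN, one_mul]
        calc (((-1)^j * poch a j * poch (-(N:ℂ)) j * poch (d + (n:ℂ) - a) (N - j) /
                  poch (d + (n:ℂ)) N) *
                (poch (e - b) j / (poch e j * (Nat.factorial j : ℂ)))) *
              (poch (d - a) n * poch b' n * poch (-(N' : ℂ)) n /
                (poch d n * poch e' n * (Nat.factorial n : ℂ)))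
            = ((-1)^j * poch (e - b) j *
                (poch (d - a) n * poch (d + (n:ℂ) - a) (N - j))) *
              (poch a j * poch (-(N:ℂ)) j * poch b' n * poch (-(N':ℂ)) n) /
              ((poch d n * poch (d + (n:ℂ)) N) *
                (poch e j * (Nat.factorial j : ℂ) * poch e' n * (Nat.factorial n : ℂ))) := by
              ring
          _ = (poch (d - a) N * poch (d - a + ((N-j : ℕ):ℂ)) n) *
              (poch a j * poch (-(N:ℂ)) j * poch b' n * poch (-(N':ℂ)) n) /
              ((poch d N * poch (d + (N:ℂ)) n) *
                (poch e j * (Nat.factorial j : ℂ) * poch e' n * (Nat.factorial n : ℂ))) := by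
              rw [hA13, hA2]
          _ = (poch a j * poch (-(N:ℂ)) j * poch (d - a) N /
                (poch e j * (Nat.factorial j : ℂ) * poch d N)) *
              (poch (d - a + ((N-j : ℕ):ℂ)) n * poch b' n * poch (-(N':ℂ)) n /
                (poch (d + (N:ℂ)) n * poch e' n * (Nat.factorial n : ℂ))) := by ring
    _ = ∑ j ∈ Finset.range (N + 1),
          (poch a j * poch (-(N:ℂ)) j * poch (d - a) N /
            (poch e j * (Nat.factorial j : ℂ) * poch d N)) *
          ∑ n ∈ Finset.range (N'+1),
            poch (d - a + ((N-j : ℕ):ℂ)) n * poch b' n * poch (-(N':ℂ)) n /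
              (poch (d + (N:ℂ)) n * poch e' n * (Nat.factorial n : ℂ)) := by
        exact Finset.sum_congr rfl fun j _ => (Finset.mul_sum _ _ _).symm
    _ = ∑ j ∈ Finset.range (N + 1),
          (poch a j * poch (-(N:ℂ)) j * poch (d - a) N /
            (poch e j * (Nat.factorial j : ℂ) * poch d N)) *
          ((poch (e' - b') N' / poch e' N') *
            ∑ i ∈ Finset.range (N'+1),
              poch (a + (j:ℂ)) i * poch b' i * poch (-(N':ℂ)) i /
                (poch (d + (N:ℂ)) i * poch (1 + b' - (N':ℂ) - e') i *
                  (Nat.factorial i : ℂ))) := by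
        refine Finset.sum_congr rfl fun j hj => ?_
        rw [Finset.mem_range] at hj
        rw [Teval j (by omega)]
    _ = ∑ j ∈ Finset.range (N + 1), ∑ i ∈ Finset.range (N'+1),
          (poch a j * poch (-(N:ℂ)) j * poch (d - a) N /
            (poch e j * (Nat.factorial j : ℂ) * poch d N)) *
          ((poch (e' - b') N' / poch e' N') *
            (poch (a + (j:ℂ)) i * poch b' i * poch (-(N':ℂ)) i /
              (poch (d + (N:ℂ)) i * poch (1 + b' - (N':ℂ) - e') i *
                (Nat.factorial i : ℂ)))) := by
        refine Finset.sum_congr rfl fun j _ => ?_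
        rw [Finset.mul_sum, Finset.mul_sum]
    _ = ∑ i ∈ Finset.range (N'+1), ∑ j ∈ Finset.range (N + 1),
          (poch a j * poch (-(N:ℂ)) j * poch (d - a) N /
            (poch e j * (Nat.factorial j : ℂ) * poch d N)) *
          ((poch (e' - b') N' / poch e' N') *
            (poch (a + (j:ℂ)) i * poch b' i * poch (-(N':ℂ)) i /
              (poch (d + (N:ℂ)) i * poch (1 + b' - (N':ℂ) - e') i *
                (Nat.factorial i : ℂ)))) := Finset.sum_comm
    _ = ∑ i ∈ Finset.range (N'+1),
          (poch (d - a) N * poch (e' - b') N' * poch a i * poch b' i * poch (-(N':ℂ)) i /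
            (poch d N * poch e' N' * poch (d + (N:ℂ)) i *
              poch (1 + b' - (N':ℂ) - e') i * (Nat.factorial i : ℂ))) *
          ∑ j ∈ Finset.range (N + 1),
            poch (-(N:ℂ)) j * poch (a + (i:ℂ)) j / (poch e j * (Nat.factorial j : ℂ)) := by
        refine Finset.sum_congr rfl fun i _ => ?_
        rw [Finset.mul_sum]
        refine Finset.sum_congr rfl fun j _ => ?_
        have hA4 : poch a j * poch (a + (j:ℂ)) i = poch a i * poch (a + (i:ℂ)) j := by
          rw [← poch_add, ← poch_add]
          congr 1
          omega
        calc (poch a j * poch (-(N:ℂ)) j * poch (d - a) N /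
                (poch e j * (Nat.factorial j : ℂ) * poch d N)) *
              ((poch (e' - b') N' / poch e' N') *
                (poch (a + (j:ℂ)) i * poch b' i * poch (-(N':ℂ)) i /
                  (poch (d + (N:ℂ)) i * poch (1 + b' - (N':ℂ) - e') i *
                    (Nat.factorial i : ℂ))))
            = (poch a j * poch (a + (j:ℂ)) i) *
              (poch (-(N:ℂ)) j * poch (d - a) N * poch (e' - b') N' * poch b' i *
                poch (-(N':ℂ)) i) /
              (poch e j * (Nat.factorial j : ℂ) * poch d N * poch e' N' *
                poch (d + (N:ℂ)) i * poch (1 + b' - (N':ℂ) - e') i *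
                (Nat.factorial i : ℂ)) := by ring
          _ = (poch a i * poch (a + (i:ℂ)) j) *
              (poch (-(N:ℂ)) j * poch (d - a) N * poch (e' - b') N' * poch b' i *
                poch (-(N':ℂ)) i) /
              (poch e j * (Nat.factorial j : ℂ) * poch d N * poch e' N' *
                poch (d + (N:ℂ)) i * poch (1 + b' - (N':ℂ) - e') i *
                (Nat.factorial i : ℂ)) := by rw [hA4]
          _ = (poch (d - a) N * poch (e' - b') N' * poch a i * poch b' i *
                poch (-(N':ℂ)) i /
                (poch d N * poch e' N' * poch (d + (N:ℂ)) i *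
                  poch (1 + b' - (N':ℂ) - e') i * (Nat.factorial i : ℂ))) *
              (poch (-(N:ℂ)) j * poch (a + (i:ℂ)) j /
                (poch e j * (Nat.factorial j : ℂ))) := by ring
    _ = ∑ i ∈ Finset.range (N'+1),
          (poch (d - a) N * poch (e' - b') N' * poch a i * poch b' i * poch (-(N':ℂ)) i /
            (poch d N * poch e' N' * poch (d + (N:ℂ)) i *
              poch (1 + b' - (N':ℂ) - e') i * (Nat.factorial i : ℂ))) *
          (poch (e - (a + (i:ℂ))) N / poch e N) := by
        refine Finset.sum_congr rfl fun i _ => ?_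
        rw [vdm_div N (a + (i:ℂ)) e hden2]
    _ = poch (d - a) N * poch (e - a) N * poch (e' - b') N' /
          (poch d N * poch e N * poch e' N') *
        ∑ k ∈ Finset.range (N' + 1),
          poch b' k * poch a k * poch (-(N' : ℂ)) k * poch (1 - e + a) k /
            (poch (1 + b' - (N' : ℂ) - e') k * poch (d + (N : ℂ)) k *
              poch (1 - e + a - (N : ℂ)) k * (Nat.factorial k : ℂ)) := by
        rw [Finset.mul_sum]
        refine Finset.sum_congr rfl fun i hi => ?_
        rw [Finset.mem_range] at hi
        have hi' : i ≤ N' := by omega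
        have r1 : poch (e - a - (i:ℂ)) i = (-1)^i * poch (1 - e + a) i := by
          rw [show e - a - (i:ℂ) = 1 - (1 - e + a) - (i:ℂ) from by ring]
          exact poch_reflect _ i
        have r2 : poch (e - a - (i:ℂ) + (N:ℂ)) i
            = (-1)^i * poch (1 - e + a - (N:ℂ)) i := by
          rw [show e - a - (i:ℂ) + (N:ℂ) = 1 - (1 - e + a - (N:ℂ)) - (i:ℂ) from by ring]
          exact poch_reflect _ i
        have r3 : poch (e - a - (i:ℂ)) i * poch (e - a) N
            = poch (e - a - (i:ℂ)) N * poch (e - a - (i:ℂ) + (N:ℂ)) i := by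
          have p1 := poch_add (e - a - (i:ℂ)) i N
          have p2 := poch_add (e - a - (i:ℂ)) N i
          rw [show e - a - (i:ℂ) + (i:ℂ) = e - a from by ring] at p1
          rw [← p1, ← p2]
          congr 1
          omega
        have hpow : ((-1:ℂ))^i ≠ 0 := pow_ne_zero _ (by norm_num)
        have hd7i : poch (1 - e + a - (N:ℂ)) i ≠ 0 := poch_ne_zero_left hden7 hi'
        have A5 : poch (e - (a + (i:ℂ))) N * poch (1 - e + a - (N:ℂ)) i
            = poch (e - a) N * poch (1 - e + a) i := by
          rw [show e - (a + (i:ℂ)) = e - a - (i:ℂ) from by ring]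
          apply mul_left_cancel₀ hpow
          rw [r1, r2] at r3
          linear_combination -r3
        have A5div : poch (e - (a + (i:ℂ))) N
            = poch (e - a) N * poch (1 - e + a) i / poch (1 - e + a - (N:ℂ)) i := by
          rw [eq_div_iff hd7i]
          exact A5
        rw [A5div]
        ring
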